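/- Let σ' be a nonempty finite CNN request sequence whose last request is r' = r(x',y'), and let σ'' = σ', r(x'',y'') be its extension by one more request. Fix λ ∈ (0,1) and α with 0 < α < (1−λ)/(2(1+λ)). Suppose F_{W_{σ''}} or G_{W_{σ''}} attains its infimum over M³ at (s_1,s_2,s_3). Then for every i ∈ {1,2,3}: (1) if s_i = (x'',y) for some y ≠ y', then (x',y) dominates s_i with respect to W_{σ'}; and (2) if s_i = (x,y'') for some x ≠ x', then (x,y') dominates s_i with respect to W_{σ'}. -/

import Mathlib

noncomputable section

/-- The L1 metric on `ℝ²` (the CNN metric space). -/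
def dL1 (p q : ℝ × ℝ) : ℝ := |p.1 - q.1| + |p.2 - q.2|

/-- The CNN request associated with a point `(x, y)`. -/
def req (p : ℝ × ℝ) : Set (ℝ × ℝ) := {q | q.1 = p.1 ∨ q.2 = p.2}

/-- The work function of a finite CNN request sequence (requests listed in order of arrival),
starting at origin `O`. -/
noncomputable def WF (O : ℝ × ℝ) : List (ℝ × ℝ) → (ℝ × ℝ) → ℝ
  | [], s => dL1 O s
  | p :: l, s => sInf ((fun t => dL1 O t + WF t l s) '' req p)

/-- The slack of a point `s` to a nonempty set `C` with respect to `W`. -/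
noncomputable def Sl (lam : ℝ) (W : ℝ × ℝ → ℝ) (s : ℝ × ℝ) (C : Set (ℝ × ℝ)) : ℝ :=
  sInf ((fun t => W t + lam * dL1 t s) '' C) - W s

/-- The rectangle spanned by two points of `ℝ²`. -/
def Boks (s1 s2 : ℝ × ℝ) : Set (ℝ × ℝ) :=
  {p | p.1 ∈ Set.uIcc s1.1 s2.1 ∧ p.2 ∈ Set.uIcc s1.2 s2.2}

/-- `H_W(s₁,s₂) = (1/2)W(s₁) + (1/2)W(s₂) − (λ/2)d(s₁,s₂)`. -/
noncomputable def Hf (lam : ℝ) (W : ℝ × ℝ → ℝ) (s1 s2 : ℝ × ℝ) : ℝ :=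
  (1 / 2) * W s1 + (1 / 2) * W s2 - (lam / 2) * dL1 s1 s2

/-- `F_W(s₁,s₂,s₃) = H_W(s₁,s₂) − α·Sl_W(s₃;{s₁,s₂})`. -/
noncomputable def Ff (lam α : ℝ) (W : ℝ × ℝ → ℝ) (s1 s2 s3 : ℝ × ℝ) : ℝ :=
  Hf lam W s1 s2 - α * Sl lam W s3 {s1, s2}

/-- `G_W(s₁,s₂,s₃) = H_W(s₁,s₂) − α·Sl_W(s₃;Boks(s₁,s₂))`. -/
noncomputable def Gf (lam α : ℝ) (W : ℝ × ℝ → ℝ) (s1 s2 s3 : ℝ × ℝ) : ℝ :=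
  Hf lam W s1 s2 - α * Sl lam W s3 (Boks s1 s2)

/-- `t` dominates `s` with respect to `W` if `W s = W t + d(s,t)`. -/
def Dominates (W : ℝ × ℝ → ℝ) (t s : ℝ × ℝ) : Prop :=
  W s = W t + dL1 s t

/-!
Every point `s` is dominated, with respect to `W_{σ'}`, by its projection onto one of the two
lines of the last request `r'`. If `s` lies on a line of `r''`, so does that projection, and
`W_{σ''}` agrees with `W_{σ'}` on `r''`, so the domination persists for `W_{σ''}`. But no point
of a minimizer of `F` or `G` is dominated by a different point: moving it there lowers `H` by
`(1-λ)/2` times the distance moved, or raises the slack by `(1-λ)` times it, while the slack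
changes by at most `(1+λ)` times it, which `α < (1-λ)/(2(1+λ))` makes too little. So when `s`
differs from its projection onto one line, it is dominated by its projection onto the other.
-/

lemma dL1_nonneg (p q : ℝ × ℝ) : 0 ≤ dL1 p q :=
  add_nonneg (abs_nonneg _) (abs_nonneg _)

lemma dL1_comm (p q : ℝ × ℝ) : dL1 p q = dL1 q p := by
  simp only [dL1, abs_sub_comm]

lemma dL1_self (p : ℝ × ℝ) : dL1 p p = 0 := by
  simp [dL1]

lemma dL1_triangle (p q r : ℝ × ℝ) : dL1 p r ≤ dL1 p q + dL1 q r := by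
  have h1 := abs_sub_le p.1 q.1 r.1
  have h2 := abs_sub_le p.2 q.2 r.2
  simp only [dL1]
  linarith

lemma eq_of_dL1_nonpos {p q : ℝ × ℝ} (h : dL1 p q ≤ 0) : p = q := by
  have h1 := abs_nonneg (p.1 - q.1)
  have h2 := abs_nonneg (p.2 - q.2)
  unfold dL1 at h
  ext
  · exact sub_eq_zero.1 (abs_nonpos_iff.1 (by linarith))
  · exact sub_eq_zero.1 (abs_nonpos_iff.1 (by linarith))

lemma dL1_eq_add_of_fst_eq {u : ℝ × ℝ} {a : ℝ} (hu : u.1 = a) (s : ℝ × ℝ) :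
    dL1 u s = dL1 u (a, s.2) + dL1 s (a, s.2) := by
  simp only [dL1, hu, sub_self, abs_zero, abs_sub_comm s.1 a]
  ring

lemma dL1_eq_add_of_snd_eq {u : ℝ × ℝ} {b : ℝ} (hu : u.2 = b) (s : ℝ × ℝ) :
    dL1 u s = dL1 u (s.1, b) + dL1 s (s.1, b) := by
  simp only [dL1, hu, sub_self, abs_zero, abs_sub_comm s.2 b]
  ring

section WorkFunction

variable {O s t : ℝ × ℝ} {l : List (ℝ × ℝ)} {p : ℝ × ℝ}

lemma le_WF_cons {c : ℝ} (h : ∀ u ∈ req p, c ≤ dL1 O u + WF u l s) : c ≤ WF O (p :: l) s :=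
  le_csInf (Set.Nonempty.image _ ⟨p, Or.inl rfl⟩) (by rintro _ ⟨u, hu, rfl⟩; exact h u hu)

lemma WF_nonneg : ∀ (l : List (ℝ × ℝ)) (O s : ℝ × ℝ), 0 ≤ WF O l s
  | [], O, s => dL1_nonneg O s
  | _ :: l, _, s => le_WF_cons fun u _ => add_nonneg (dL1_nonneg _ u) (WF_nonneg l u s)

lemma WF_cons_le {u : ℝ × ℝ} (hu : u ∈ req p) : WF O (p :: l) s ≤ dL1 O u + WF u l s :=
  csInf_le ⟨0, by rintro _ ⟨v, -, rfl⟩; exact add_nonneg (dL1_nonneg O v) (WF_nonneg l v s)⟩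
    ⟨u, hu, rfl⟩

lemma WF_le_add_dL1 : ∀ (l : List (ℝ × ℝ)) (O s t : ℝ × ℝ), WF O l s ≤ WF O l t + dL1 s t
  | [], O, s, t => dL1_comm t s ▸ dL1_triangle O t s
  | p :: l, O, s, t => by
    have h : WF O (p :: l) s - dL1 s t ≤ WF O (p :: l) t := le_WF_cons fun u hu => by
      linarith [WF_cons_le (l := l) (O := O) (s := s) hu, WF_le_add_dL1 l u s t]
    linarith

lemma WF_append_le (ht : t ∈ req p) : WF O (l ++ [p]) s ≤ WF O l t + dL1 t s := by
  induction l generalizing O with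
  | nil => exact WF_cons_le ht
  | cons q l ih =>
    have h : WF O (q :: (l ++ [p])) s - dL1 t s ≤ WF O (q :: l) t := le_WF_cons fun u hu => by
      linarith [WF_cons_le (l := l ++ [p]) (O := O) (s := s) hu, ih (O := u)]
    simp only [List.cons_append]
    linarith

lemma le_WF_append {c : ℝ} (h : ∀ u ∈ req p, c ≤ WF O l u + dL1 u s) :
    c ≤ WF O (l ++ [p]) s := by
  induction l generalizing O c with
  | nil => exact le_WF_cons h
  | cons q l ih =>
    rw [List.cons_append]
    refine le_WF_cons fun u hu => ?_
    have : c - dL1 O u ≤ WF u (l ++ [p]) s := ih fun v hv => by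
      linarith [h v hv, WF_cons_le (l := l) (O := O) (s := v) hu]
    linarith

lemma WF_le_WF_append : WF O l s ≤ WF O (l ++ [p]) s :=
  le_WF_append fun u _ => dL1_comm s u ▸ WF_le_add_dL1 l O s u

lemma WF_append_eq_of_mem_req (hs : s ∈ req p) : WF O (l ++ [p]) s = WF O l s :=
  le_antisymm (by simpa [dL1_self] using WF_append_le (l := l) (O := O) (s := s) hs)
    WF_le_WF_append

lemma dominates_append_iff (hs : s ∈ req p) (ht : t ∈ req p) :
    Dominates (WF O (l ++ [p])) t s ↔ Dominates (WF O l) t s := by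
  unfold Dominates
  rw [WF_append_eq_of_mem_req hs, WF_append_eq_of_mem_req ht]

/- The last request is served on one of its two lines, and the cheapest way from such a
line to `s` passes through the projection of `s` onto it. -/
lemma dominates_or_dominates (O : ℝ × ℝ) (l : List (ℝ × ℝ)) (p s : ℝ × ℝ) :
    Dominates (WF O (l ++ [p])) (p.1, s.2) s ∨ Dominates (WF O (l ++ [p])) (s.1, p.2) s := by
  set W := WF O (l ++ [p])
  have hmin : min (W (p.1, s.2) + dL1 s (p.1, s.2)) (W (s.1, p.2) + dL1 s (s.1, p.2)) ≤ W s := by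
    refine le_WF_append fun u hu => ?_
    rcases hu with hu | hu
    · have := WF_append_le (l := l) (O := O) (s := (p.1, s.2)) (Or.inl hu)
      rw [dL1_eq_add_of_fst_eq hu s]
      exact (min_le_left _ _).trans (by linarith)
    · have := WF_append_le (l := l) (O := O) (s := (s.1, p.2)) (Or.inr hu)
      rw [dL1_eq_add_of_snd_eq hu s]
      exact (min_le_right _ _).trans (by linarith)
  rcases min_le_iff.1 hmin with h | h
  · exact Or.inl ((WF_le_add_dL1 _ _ _ _).antisymm h)
  · exact Or.inr ((WF_le_add_dL1 _ _ _ _).antisymm h)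

end WorkFunction

section Slack

variable {lam : ℝ} {W : ℝ × ℝ → ℝ} {C C' : Set (ℝ × ℝ)} {s t : ℝ × ℝ}

lemma Sl_le_of_mem (hlam : 0 ≤ lam) (hW0 : ∀ s, 0 ≤ W s) {u : ℝ × ℝ} (hu : u ∈ C) :
    Sl lam W s C ≤ W u + lam * dL1 u s - W s :=
  have hbdd : BddBelow ((fun v => W v + lam * dL1 v s) '' C) :=
    ⟨0, by rintro _ ⟨v, -, rfl⟩; exact add_nonneg (hW0 v) (mul_nonneg hlam (dL1_nonneg v s))⟩
  sub_le_sub_right (csInf_le hbdd ⟨u, hu, rfl⟩) _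

lemma le_Sl {c : ℝ} (hC : C.Nonempty) (h : ∀ u ∈ C, c ≤ W u + lam * dL1 u s - W s) :
    c ≤ Sl lam W s C :=
  le_sub_iff_add_le.2 <| le_csInf (hC.image _) <| by
    rintro _ ⟨u, hu, rfl⟩; linarith [h u hu]

lemma Sl_add_le_of_dominates (hlam : 0 ≤ lam) (hW0 : ∀ s, 0 ≤ W s) (hC : C.Nonempty)
    (hdom : Dominates W t s) : Sl lam W s C + (1 - lam) * dL1 s t ≤ Sl lam W t C := by
  refine le_Sl hC fun u hu => ?_
  have := Sl_le_of_mem (s := s) hlam hW0 hu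
  have := mul_le_mul_of_nonneg_left (dL1_comm t s ▸ dL1_triangle u t s) hlam
  unfold Dominates at hdom
  linarith

lemma Sl_sub_le_of_forall_exists (hlam : 0 ≤ lam) (hW0 : ∀ s, 0 ≤ W s)
    (hW : ∀ s t, W s ≤ W t + dL1 s t) (hC' : C'.Nonempty) {D : ℝ}
    (hnear : ∀ u' ∈ C', ∃ u ∈ C, dL1 u u' ≤ D) (s : ℝ × ℝ) :
    Sl lam W s C - (1 + lam) * D ≤ Sl lam W s C' := by
  refine le_Sl hC' fun u' hu' => ?_
  obtain ⟨u, hu, huu'⟩ := hnear u' hu'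
  have := Sl_le_of_mem (s := s) hlam hW0 hu
  have := dL1_triangle u u' s
  have := mul_le_mul_of_nonneg_left (show dL1 u s ≤ D + dL1 u' s by linarith) hlam
  linarith [hW u u']

lemma Hf_le_of_dominates (hlam : 0 ≤ lam) {a t : ℝ × ℝ} (hdom : Dominates W t a) (b : ℝ × ℝ) :
    Hf lam W t b ≤ Hf lam W a b - (1 - lam) / 2 * dL1 a t := by
  have := mul_le_mul_of_nonneg_left (dL1_triangle a t b) hlam
  unfold Hf
  unfold Dominates at hdom
  linarith

lemma Hf_comm (lam : ℝ) (W : ℝ × ℝ → ℝ) (a b : ℝ × ℝ) : Hf lam W a b = Hf lam W b a := by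
  unfold Hf
  rw [dL1_comm]
  ring

end Slack

/- `K s₁ s₂` is the set to which the slack of `s₃` is measured: `{s₁, s₂}` in `F`,
`Boks s₁ s₂` in `G`. -/
structure IsSpanRule (K : ℝ × ℝ → ℝ × ℝ → Set (ℝ × ℝ)) : Prop where
  nonempty : ∀ a b, (K a b).Nonempty
  comm : ∀ a b, K a b = K b a
  exists_near_of_move : ∀ a b t, ∀ u' ∈ K t b, ∃ u ∈ K a b, dL1 u u' ≤ dL1 a t

lemma isSpanRule_pair : IsSpanRule fun a b => {a, b} where
  nonempty a _ := ⟨a, Or.inl rfl⟩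
  comm := Set.pair_comm
  exists_near_of_move a b t := by
    rintro u' (rfl | rfl)
    · exact ⟨a, Or.inl rfl, le_rfl⟩
    · exact ⟨u', Or.inr rfl, by rw [dL1_self]; exact dL1_nonneg a t⟩

lemma exists_mem_uIcc_abs_sub_le {a b t v : ℝ} (hv : v ∈ Set.uIcc t b) :
    ∃ u ∈ Set.uIcc a b, |u - v| ≤ |a - t| := by
  rw [← segment_eq_uIcc] at hv
  obtain ⟨c, d, hc, hd, hcd, rfl⟩ := hv
  refine ⟨c • a + d • b, segment_eq_uIcc a b ▸ ⟨c, d, hc, hd, hcd, rfl⟩, ?_⟩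
  calc |c • a + d • b - (c • t + d • b)| = c * |a - t| := by
        rw [show c • a + d • b - (c • t + d • b) = c * (a - t) by simp only [smul_eq_mul]; ring,
          abs_mul, abs_of_nonneg hc]
    _ ≤ |a - t| := mul_le_of_le_one_left (abs_nonneg _) (by linarith)

lemma isSpanRule_boks : IsSpanRule Boks where
  nonempty a _ := ⟨a, Set.left_mem_uIcc, Set.left_mem_uIcc⟩
  comm a b := by simp only [Boks, Set.uIcc_comm]
  exists_near_of_move a b t := by
    rintro u' ⟨h1, h2⟩
    obtain ⟨u1, hu1, hd1⟩ := exists_mem_uIcc_abs_sub_le (a := a.1) h1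
    obtain ⟨u2, hu2, hd2⟩ := exists_mem_uIcc_abs_sub_le (a := a.2) h2
    exact ⟨(u1, u2), ⟨hu1, hu2⟩, add_le_add hd1 hd2⟩

def penalizedH (lam α : ℝ) (W : ℝ × ℝ → ℝ) (K : ℝ × ℝ → ℝ × ℝ → Set (ℝ × ℝ))
    (s1 s2 s3 : ℝ × ℝ) : ℝ :=
  Hf lam W s1 s2 - α * Sl lam W s3 (K s1 s2)

section Minimizer

variable {lam α : ℝ} {W : ℝ × ℝ → ℝ} {K : ℝ × ℝ → ℝ × ℝ → Set (ℝ × ℝ)} {s1 s2 s3 : ℝ × ℝ}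

lemma IsSpanRule.penalizedH_comm (hK : IsSpanRule K) (a b c : ℝ × ℝ) :
    penalizedH lam α W K a b c = penalizedH lam α W K b a c := by
  rw [penalizedH, penalizedH, Hf_comm, hK.comm]

lemma eq_of_dominates_of_forall_Sl_le (hlam0 : 0 ≤ lam) (hlam1 : lam < 1)
    (hW0 : ∀ s, 0 ≤ W s) {C : Set (ℝ × ℝ)} (hC : C.Nonempty) {s t : ℝ × ℝ}
    (hmax : ∀ t, Sl lam W t C ≤ Sl lam W s C) (hdom : Dominates W t s) : t = s := by
  have := Sl_add_le_of_dominates hlam0 hW0 hC hdom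
  have := hmax t
  exact (eq_of_dL1_nonpos (nonpos_of_mul_nonpos_right (a := 1 - lam) (by linarith)
    (by linarith))).symm

lemma IsSpanRule.eq_of_dominates_of_forall_penalizedH_le_left (hK : IsSpanRule K)
    (hlam : 0 ≤ lam) (hα : 0 ≤ α) (hαlam : α * (1 + lam) < (1 - lam) / 2)
    (hW0 : ∀ s, 0 ≤ W s) (hW : ∀ s t, W s ≤ W t + dL1 s t)
    (hmin : ∀ t, penalizedH lam α W K s1 s2 s3 ≤ penalizedH lam α W K t s2 s3) {t : ℝ × ℝ}
    (hdom : Dominates W t s1) : t = s1 := by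
  have hH := Hf_le_of_dominates hlam hdom s2
  have hSl := mul_le_mul_of_nonneg_left (Sl_sub_le_of_forall_exists hlam hW0 hW
    (hK.nonempty t s2) (hK.exists_near_of_move s1 s2 t) s3) hα
  have := hmin t
  unfold penalizedH at this
  refine (eq_of_dL1_nonpos (nonpos_of_mul_nonpos_right (a := (1 - lam) / 2 - α * (1 + lam))
    ?_ (by linarith))).symm
  linarith

lemma IsSpanRule.eq_of_dominates_of_forall_penalizedH_le (hK : IsSpanRule K)
    (hlam : 0 ≤ lam) (hα0 : 0 < α) (hα1 : α < (1 - lam) / (2 * (1 + lam)))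
    (hW0 : ∀ s, 0 ≤ W s) (hW : ∀ s t, W s ≤ W t + dL1 s t)
    (hmin : ∀ t1 t2 t3, penalizedH lam α W K s1 s2 s3 ≤ penalizedH lam α W K t1 t2 t3)
    {s t : ℝ × ℝ} (hs : s ∈ ({s1, s2, s3} : Set (ℝ × ℝ))) (hdom : Dominates W t s) : t = s := by
  have hα1' : α * (2 * (1 + lam)) < 1 - lam := (lt_div_iff₀ (by linarith)).1 hα1
  have hαlam : α * (1 + lam) < (1 - lam) / 2 := by linarith
  rcases hs with rfl | rfl | rfl
  · exact hK.eq_of_dominates_of_forall_penalizedH_le_left hlam hα0.le hαlam hW0 hW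
      (fun t => hmin t s2 s3) hdom
  · refine hK.eq_of_dominates_of_forall_penalizedH_le_left (s2 := s1) (s3 := s3) hlam hα0.le
      hαlam hW0 hW (fun t => ?_) hdom
    rw [hK.penalizedH_comm _ s1, hK.penalizedH_comm t]
    exact hmin s1 t s3
  · have hlam1 : lam < 1 := by linarith [mul_pos hα0 (by linarith : 0 < 2 * (1 + lam))]
    refine eq_of_dominates_of_forall_Sl_le hlam hlam1 hW0 (hK.nonempty s1 s2) (fun t => ?_) hdom
    have := hmin s1 s2 t
    unfold penalizedH at this
    exact le_of_mul_le_mul_left (by linarith) hα0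

end Minimizer

theorem minimizer_domination_general (lam α : ℝ) (h0 : 0 < lam)
    (hα0 : 0 < α) (hα1 : α < (1 - lam) / (2 * (1 + lam)))
    (O : ℝ × ℝ) (l : List (ℝ × ℝ)) (x' y' x'' y'' : ℝ) (s1 s2 s3 : ℝ × ℝ)
    (hmin :
      (∀ t1 t2 t3 : ℝ × ℝ,
        Ff lam α (WF O (l ++ [(x', y'), (x'', y'')])) s1 s2 s3 ≤
          Ff lam α (WF O (l ++ [(x', y'), (x'', y'')])) t1 t2 t3) ∨
      (∀ t1 t2 t3 : ℝ × ℝ,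
        Gf lam α (WF O (l ++ [(x', y'), (x'', y'')])) s1 s2 s3 ≤
          Gf lam α (WF O (l ++ [(x', y'), (x'', y'')])) t1 t2 t3)) :
    ∀ s ∈ ({s1, s2, s3} : Set (ℝ × ℝ)),
      (s.1 = x'' → s.2 ≠ y' → Dominates (WF O (l ++ [(x', y')])) (x', s.2) s) ∧
      (s.2 = y'' → s.1 ≠ x' → Dominates (WF O (l ++ [(x', y')])) (s.1, y') s) := by
  intro s hs
  rw [show l ++ [(x', y'), (x'', y'')] = l ++ [(x', y')] ++ [(x'', y'')] by simp] at hmin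
  have hW0 := WF_nonneg (l ++ [(x', y')] ++ [(x'', y'')]) O
  have hW := WF_le_add_dL1 (l ++ [(x', y')] ++ [(x'', y'')]) O
  have undominated : ∀ t, Dominates (WF O (l ++ [(x', y')] ++ [(x'', y'')])) t s → t = s := by
    intro t hdom
    rcases hmin with hF | hG
    · exact isSpanRule_pair.eq_of_dominates_of_forall_penalizedH_le h0.le hα0 hα1 hW0 hW hF hs hdom
    · exact isSpanRule_boks.eq_of_dominates_of_forall_penalizedH_le h0.le hα0 hα1 hW0 hW hG hs hdom
  constructor
  · intro hx hy
    refine (dominates_or_dominates O l (x', y') s).resolve_right fun hdom => hy ?_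
    have := undominated _ ((dominates_append_iff (Or.inl hx) (Or.inl hx)).2 hdom)
    exact (congrArg Prod.snd this).symm
  · intro hy hx
    refine (dominates_or_dominates O l (x', y') s).resolve_left fun hdom => hx ?_
    have := undominated _ ((dominates_append_iff (Or.inr hy) (Or.inr hy)).2 hdom)
    exact (congrArg Prod.fst this).symm

/-- Let `σ'` have last request `r(x',y')` and let `σ'' = σ', r(x'',y'')`. If `F_{W_{σ''}}` or
`G_{W_{σ''}}` is minimized at `(s₁,s₂,s₃)`, then for each `sᵢ`: if `sᵢ = (x'',y)` with
`y ≠ y'` then `(x',y)` dominates `sᵢ` w.r.t. `W_{σ'}`, and if `sᵢ = (x,y'')` with `x ≠ x'`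
then `(x,y')` dominates `sᵢ` w.r.t. `W_{σ'}`. -/
theorem minimizer_domination (lam α : ℝ) (h0 : 0 < lam) (h1 : lam < 1)
    (hα0 : 0 < α) (hα1 : α < (1 - lam) / (2 * (1 + lam)))
    (O : ℝ × ℝ) (l : List (ℝ × ℝ)) (x' y' x'' y'' : ℝ) (s1 s2 s3 : ℝ × ℝ)
    (hmin :
      (∀ t1 t2 t3 : ℝ × ℝ,
        Ff lam α (WF O (l ++ [(x', y'), (x'', y'')])) s1 s2 s3 ≤
          Ff lam α (WF O (l ++ [(x', y'), (x'', y'')])) t1 t2 t3) ∨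
      (∀ t1 t2 t3 : ℝ × ℝ,
        Gf lam α (WF O (l ++ [(x', y'), (x'', y'')])) s1 s2 s3 ≤
          Gf lam α (WF O (l ++ [(x', y'), (x'', y'')])) t1 t2 t3)) :
    ∀ s ∈ ({s1, s2, s3} : Set (ℝ × ℝ)),
      (s.1 = x'' → s.2 ≠ y' → Dominates (WF O (l ++ [(x', y')])) (x', s.2) s) ∧
      (s.2 = y'' → s.1 ≠ x' → Dominates (WF O (l ++ [(x', y')])) (s.1, y') s) :=
  minimizer_domination_general lam α h0 hα0 hα1 O l x' y' x'' y'' s1 s2 s3 hmin
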